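/- arXiv:2411.11718 — 3 statements merged into one kernel-verified Lean document; each statement's English description precedes it below -/
import Mathlib

section
/- Let G be a finite connected graph with nonnegative edge weights, let H be a subgraph of G containing vertices u and v, and let S ⊆ V(G) be a set of vertices such that every u–v walk in G that uses an edge not in H passes through some vertex of S. Then dist_G(u,v) = min( dist_H(u,v), min_{x ∈ S} ( dist_G(u,x) + dist_G(x,v) ) ), where dist_H(u,v) = ∞ if u,v are not connected in H. -/
open SimpleGraph
open scoped ENNReal

/-- Total weight of a walk in an `ℝ≥0∞`-weighted graph. -/
noncomputable def ewalkWeight {V : Type*} {G : SimpleGraph V} (w : V → V → ℝ≥0∞)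
    {u v : V} (p : G.Walk u v) : ℝ≥0∞ :=
  (p.darts.map fun d => w d.toProd.1 d.toProd.2).sum

/-- Shortest-path distance in an `ℝ≥0∞`-weighted graph, `∞` if not connected. -/
noncomputable def eDist {V : Type*} (G : SimpleGraph V) (w : V → V → ℝ≥0∞) (u v : V) : ℝ≥0∞ :=
  ⨅ p : G.Walk u v, ewalkWeight w p

/-!
A `u`–`v` walk in `G` either stays inside `H`, and then costs at least `dist_H(u,v)`,
or leaves `H`, and then it passes through some `x ∈ S`; splitting it at `x` shows that it costs
at least `dist_G(u,x) + dist_G(x,v)`. The reverse inequalities are monotonicity of distance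
under `H ≤ G` and the triangle inequality.
-/

section

variable {V : Type*} {G H : SimpleGraph V} (w : V → V → ℝ≥0∞) {u v x : V}

lemma ewalkWeight_append (p : G.Walk u x) (q : G.Walk x v) :
    ewalkWeight w (p.append q) = ewalkWeight w p + ewalkWeight w q := by
  simp [ewalkWeight, Walk.darts_append]

lemma ewalkWeight_transfer (p : G.Walk u v) (hp : ∀ e ∈ p.edges, e ∈ H.edgeSet) :
    ewalkWeight w (p.transfer H hp) = ewalkWeight w p := by
  induction p with
  | nil => rfl
  | cons _ p ih =>
    simp only [ewalkWeight, Walk.transfer, Walk.darts_cons, List.map_cons, List.sum_cons] at ih ⊢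
    exact congrArg (w _ _ + ·) (ih _)

lemma eDist_le_ewalkWeight (p : G.Walk u v) : eDist G w u v ≤ ewalkWeight w p :=
  iInf_le _ p

lemma eDist_le_ewalkWeight_of_forall_dart_adj (p : G.Walk u v)
    (hp : ∀ d ∈ p.darts, H.Adj d.toProd.1 d.toProd.2) : eDist H w u v ≤ ewalkWeight w p := by
  have hedges : ∀ e ∈ p.edges, e ∈ H.edgeSet := by
    simp only [Walk.edges, List.mem_map]
    rintro _ ⟨d, hd, rfl⟩
    exact hp d hd
  simpa only [ewalkWeight_transfer] using eDist_le_ewalkWeight w (p.transfer H hedges)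

lemma eDist_mono (hHG : H ≤ G) : eDist G w u v ≤ eDist H w u v :=
  le_iInf fun p => eDist_le_ewalkWeight_of_forall_dart_adj w p fun d _ => hHG d.adj

lemma eDist_triangle (u x v : V) : eDist G w u v ≤ eDist G w u x + eDist G w x v := by
  unfold eDist
  rw [ENNReal.iInf_add]
  refine le_iInf fun p => ?_
  rw [ENNReal.add_iInf]
  exact le_iInf fun q => ewalkWeight_append w p q ▸ iInf_le _ (p.append q)

lemma eDist_add_eDist_le_ewalkWeight [DecidableEq V] (p : G.Walk u v) (hx : x ∈ p.support) :
    eDist G w u x + eDist G w x v ≤ ewalkWeight w p := by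
  conv_rhs => rw [← p.take_spec hx, ewalkWeight_append]
  gcongr <;> exact eDist_le_ewalkWeight w _

end

theorem stmt3_general {V : Type*} (G H : SimpleGraph V) (hHG : H ≤ G)
    (w : V → V → ℝ≥0∞) (u v : V) (S : Set V)
    (hsep : ∀ p : G.Walk u v,
      (∃ d ∈ p.darts, ¬ H.Adj d.toProd.1 d.toProd.2) → ∃ x ∈ S, x ∈ p.support) :
    eDist G w u v =
      min (eDist H w u v) (⨅ x ∈ S, eDist G w u x + eDist G w x v) := by
  classical
  refine le_antisymm (le_min (eDist_mono w hHG) (le_iInf₂ fun x _ => eDist_triangle w u x v)) ?_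
  refine le_iInf fun p => ?_
  by_cases hH : ∀ d ∈ p.darts, H.Adj d.toProd.1 d.toProd.2
  · exact min_le_of_left_le (eDist_le_ewalkWeight_of_forall_dart_adj w p hH)
  · push Not at hH
    obtain ⟨x, hxS, hxp⟩ := hsep p hH
    exact min_le_of_right_le <| (iInf₂_le x hxS).trans (eDist_add_eDist_le_ewalkWeight w p hxp)

theorem stmt3 {V : Type*} [Fintype V] (G H : SimpleGraph V) (hHG : H ≤ G)
    (hconn : G.Connected) (w : V → V → ℝ≥0∞) (u v : V) (S : Set V)
    (hsep : ∀ p : G.Walk u v,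
      (∃ d ∈ p.darts, ¬ H.Adj d.toProd.1 d.toProd.2) → ∃ x ∈ S, x ∈ p.support) :
    eDist G w u v =
      min (eDist H w u v) (⨅ x ∈ S, eDist G w u x + eDist G w x v) :=
  stmt3_general G H hHG w u v S hsep
end

section
/- Let G be a finite connected graph, T a spanning tree of G, and (S, V∖S) a cut with S nonempty and V∖S nonempty. Suppose exactly two distinct tree edges e₁, e₂ ∈ E(T) cross the cut (i.e., have one endpoint in S and one in V∖S). Then T − {e₁, e₂} has exactly three connected components, exactly one of these components is incident (in T) to both e₁ and e₂, and that component's vertex set equals either S or V∖S. -/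
/-!
Every edge of `T - {e₁, e₂}` stays on one side of the cut, so each component lies in `S` or in
`Sᶜ`, and since `T` is connected every component contains an endpoint of `e₁` or `e₂`.
Following a walk in `T` from `a₁` to `a₂` shows that `a₁, a₂` or `b₁, b₂` share a component; not
both, for then `e₂` would lie on a cycle through `e₁`. If `a₁, a₂` do, the components are those of
`a₁`, `b₁`, `b₂`, and the one of `a₁` is exactly `S`; the other case is the same with `S`
replaced by `Sᶜ`.
-/

namespace SimpleGraph

variable {V : Type*}

theorem Reachable.mem_iff_of_forall_adj {G : SimpleGraph V} {X : Set V}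
    (hX : ∀ ⦃x y⦄, G.Adj x y → x ∈ X → y ∈ X) {u v : V} (h : G.Reachable u v) :
    u ∈ X ↔ v ∈ X := by
  obtain ⟨p⟩ := h
  induction p with
  | nil => rfl
  | cons hadj _ ih => exact ⟨fun hu ↦ ih.1 (hX hadj hu), fun hv ↦ hX hadj.symm (ih.2 hv)⟩

variable {T : SimpleGraph V}

theorem Reachable.mem_iff_of_deleteEdges {E : Set (Sym2 V)} {S : Set V}
    (hcut : ∀ x y, T.Adj x y → x ∈ S → y ∉ S → s(x, y) ∈ E) {u v : V}
    (h : (T.deleteEdges E).Reachable u v) : u ∈ S ↔ v ∈ S :=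
  h.mem_iff_of_forall_adj fun x y hxy hx ↦ by
    by_contra hy
    exact (deleteEdges_adj.1 hxy).2 (hcut x y (deleteEdges_adj.1 hxy).1 hx hy)

theorem Preconnected.connectedComponentMk_deleteEdges_mem (hT : T.Preconnected)
    {E : Set (Sym2 V)} {C : Set (T.deleteEdges E).ConnectedComponent}
    (hC : ∀ x y, s(x, y) ∈ E →
      (T.deleteEdges E).connectedComponentMk x ∈ C → (T.deleteEdges E).connectedComponentMk y ∈ C)
    {u : V} (hu : (T.deleteEdges E).connectedComponentMk u ∈ C) (v : V) :
    (T.deleteEdges E).connectedComponentMk v ∈ C := by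
  refine (Reachable.mem_iff_of_forall_adj (X := {x | _ ∈ C}) (fun x y hxy hx ↦ ?_) (hT u v)).1 hu
  by_cases he : s(x, y) ∈ E
  · exact hC x y he hx
  · rwa [Set.mem_ofPred_eq, ← ConnectedComponent.connectedComponentMk_eq_of_adj
      (deleteEdges_adj.2 ⟨hxy, he⟩)]

section PairOfEdges

variable {S : Set V} {a₁ b₁ a₂ b₂ : V}

local notation "𝓗" => T.deleteEdges {s(a₁, b₁), s(a₂, b₂)}
local notation "κ" => connectedComponentMk 𝓗

theorem Preconnected.connectedComponentMk_deleteEdges_pair_mem (hT : T.Preconnected)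
    {C : Set (ConnectedComponent 𝓗)} (h₁ : κ a₁ ∈ C ↔ κ b₁ ∈ C) (h₂ : κ a₂ ∈ C ↔ κ b₂ ∈ C)
    {u : V} (hu : κ u ∈ C) (v : V) : κ v ∈ C := by
  refine hT.connectedComponentMk_deleteEdges_mem (fun x y he ↦ ?_) hu v
  rcases he with he | he <;> obtain ⟨rfl, rfl⟩ | ⟨rfl, rfl⟩ := Sym2.eq_iff.1 he
  exacts [h₁.1, h₁.2, h₂.1, h₂.2]

theorem IsAcyclic.connectedComponentMk_deleteEdges_pair_ne (hT : T.IsAcyclic)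
    (h₁ : T.Adj a₁ b₁) (h₂ : T.Adj a₂ b₂) (hne : s(a₁, b₁) ≠ s(a₂, b₂))
    (hA : κ a₁ = κ a₂) : κ b₁ ≠ κ b₂ := by
  intro hB
  have hle : 𝓗 ≤ T.deleteEdges {s(a₂, b₂)} := deleteEdges_anti (by simp)
  have hadj : (T.deleteEdges {s(a₂, b₂)}).Adj a₁ b₁ := deleteEdges_adj.2 ⟨h₁, hne⟩
  exact isAcyclic_iff_forall_adj_isBridge.1 hT h₂ <|
    ((ConnectedComponent.exact hA).symm.mono hle).trans <|
      hadj.reachable.trans <| (ConnectedComponent.exact hB).mono hle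

theorem mem_iff_of_connectedComponentMk_deleteEdges_pair_eq
    (honly : ∀ x y : V, T.Adj x y → x ∈ S → y ∉ S →
      s(x, y) = s(a₁, b₁) ∨ s(x, y) = s(a₂, b₂))
    {x y : V} (h : κ x = κ y) : x ∈ S ↔ y ∈ S :=
  (ConnectedComponent.exact h).mem_iff_of_deleteEdges honly

theorem Preconnected.connectedComponentMk_deleteEdges_pair_eq_or_eq (hT : T.Preconnected)
    (ha₁ : a₁ ∈ S) (hb₁ : b₁ ∉ S) (ha₂ : a₂ ∈ S) (hb₂ : b₂ ∉ S)
    (honly : ∀ x y : V, T.Adj x y → x ∈ S → y ∉ S →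
      s(x, y) = s(a₁, b₁) ∨ s(x, y) = s(a₂, b₂)) :
    κ a₁ = κ a₂ ∨ κ b₁ = κ b₂ := by
  -- Otherwise the components of a₁ and b₁ are closed under both deleted edges, yet miss a₂.
  by_contra! ⟨hA, hB⟩
  have side {x y : V} (h : κ x = κ y) : x ∈ S ↔ y ∈ S :=
    mem_iff_of_connectedComponentMk_deleteEdges_pair_eq honly h
  have ha₂C : κ a₂ ∉ ({κ a₁, κ b₁} : Set _) := by
    rintro (h | h)
    exacts [hA h.symm, hb₁ ((side h).1 ha₂)]
  have hb₂C : κ b₂ ∉ ({κ a₁, κ b₁} : Set _) := by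
    rintro (h | h)
    exacts [hb₂ ((side h).2 ha₁), hB h.symm]
  exact ha₂C <| hT.connectedComponentMk_deleteEdges_pair_mem (by simp) (iff_of_false ha₂C hb₂C)
    (u := a₁) (by simp) a₂

theorem IsTree.deleteEdges_pair_of_connectedComponentMk_eq (hT : T.IsTree)
    (h₁ : T.Adj a₁ b₁) (ha₁ : a₁ ∈ S) (hb₁ : b₁ ∉ S)
    (h₂ : T.Adj a₂ b₂) (ha₂ : a₂ ∈ S) (hb₂ : b₂ ∉ S)
    (hne : s(a₁, b₁) ≠ s(a₂, b₂))
    (honly : ∀ x y : V, T.Adj x y → x ∈ S → y ∉ S →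
      s(x, y) = s(a₁, b₁) ∨ s(x, y) = s(a₂, b₂))
    (hA : κ a₁ = κ a₂) :
    Nat.card (ConnectedComponent 𝓗) = 3 ∧
    (∃! c : ConnectedComponent 𝓗, (κ a₁ = c ∨ κ b₁ = c) ∧ (κ a₂ = c ∨ κ b₂ = c)) ∧
    (∀ c : ConnectedComponent 𝓗, ((κ a₁ = c ∨ κ b₁ = c) ∧ (κ a₂ = c ∨ κ b₂ = c)) →
      c.supp = S ∨ c.supp = Sᶜ) := by
  have side {x y : V} (h : κ x = κ y) : x ∈ S ↔ y ∈ S :=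
    mem_iff_of_connectedComponentMk_deleteEdges_pair_eq honly h
  have hB := hT.isAcyclic.connectedComponentMk_deleteEdges_pair_ne h₁ h₂ hne hA
  have ha₁b₁ : κ a₁ ≠ κ b₁ := fun h ↦ hb₁ ((side h).1 ha₁)
  have ha₁b₂ : κ a₁ ≠ κ b₂ := fun h ↦ hb₂ ((side h).1 ha₁)
  have cover : ∀ v, κ v ∈ ({κ a₁, κ b₁, κ b₂} : Set _) :=
    hT.connected.preconnected.connectedComponentMk_deleteEdges_pair_mem (by simp)
      (by simp [← hA]) (u := a₁) (by simp)
  have incident : ∀ c, ((κ a₁ = c ∨ κ b₁ = c) ∧ (κ a₂ = c ∨ κ b₂ = c)) ↔ c = κ a₁ := by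
    refine fun c ↦ ⟨?_, fun hc ↦ ⟨Or.inl hc.symm, Or.inl (hA ▸ hc.symm)⟩⟩
    rintro ⟨rfl | rfl, h | h⟩
    exacts [rfl, rfl, absurd ((side h).1 ha₂) hb₁, absurd h.symm hB]
  have supp : (κ a₁).supp = S := by
    ext x
    rw [ConnectedComponent.mem_supp_iff]
    refine ⟨fun h ↦ (side h).2 ha₁, fun hx ↦ ?_⟩
    rcases cover x with h | h | h
    · exact h
    · exact absurd ((side h).1 hx) hb₁
    · exact absurd ((side h).1 hx) hb₂
  refine ⟨?_, ⟨κ a₁, (incident _).2 rfl, fun c hc ↦ (incident c).1 hc⟩,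
    fun c hc ↦ Or.inl ((incident c).1 hc ▸ supp)⟩
  rw [← Set.ncard_univ, Set.ncard_eq_three]
  exact ⟨_, _, _, ha₁b₁, ha₁b₂, hB, (Set.eq_univ_of_forall (ConnectedComponent.ind cover)).symm⟩

end PairOfEdges

end SimpleGraph

theorem stmt6_general {V : Type*} (T : SimpleGraph V)
    (hT : T.IsTree)
    (S : Set V)
    (a₁ b₁ a₂ b₂ : V)
    (h₁ : T.Adj a₁ b₁) (ha₁ : a₁ ∈ S) (hb₁ : b₁ ∉ S)
    (h₂ : T.Adj a₂ b₂) (ha₂ : a₂ ∈ S) (hb₂ : b₂ ∉ S)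
    (hne : s(a₁, b₁) ≠ s(a₂, b₂))
    (honly : ∀ x y : V, T.Adj x y → x ∈ S → y ∉ S →
      s(x, y) = s(a₁, b₁) ∨ s(x, y) = s(a₂, b₂)) :
    Nat.card (T.deleteEdges {s(a₁, b₁), s(a₂, b₂)}).ConnectedComponent = 3 ∧
    (∃! c : (T.deleteEdges {s(a₁, b₁), s(a₂, b₂)}).ConnectedComponent,
      ((T.deleteEdges {s(a₁, b₁), s(a₂, b₂)}).connectedComponentMk a₁ = c ∨
        (T.deleteEdges {s(a₁, b₁), s(a₂, b₂)}).connectedComponentMk b₁ = c) ∧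
      ((T.deleteEdges {s(a₁, b₁), s(a₂, b₂)}).connectedComponentMk a₂ = c ∨
        (T.deleteEdges {s(a₁, b₁), s(a₂, b₂)}).connectedComponentMk b₂ = c)) ∧
    (∀ c : (T.deleteEdges {s(a₁, b₁), s(a₂, b₂)}).ConnectedComponent,
      (((T.deleteEdges {s(a₁, b₁), s(a₂, b₂)}).connectedComponentMk a₁ = c ∨
          (T.deleteEdges {s(a₁, b₁), s(a₂, b₂)}).connectedComponentMk b₁ = c) ∧
        ((T.deleteEdges {s(a₁, b₁), s(a₂, b₂)}).connectedComponentMk a₂ = c ∨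
          (T.deleteEdges {s(a₁, b₁), s(a₂, b₂)}).connectedComponentMk b₂ = c)) →
      c.supp = S ∨ c.supp = Sᶜ) := by
  rcases hT.connected.preconnected.connectedComponentMk_deleteEdges_pair_eq_or_eq
    ha₁ hb₁ ha₂ hb₂ honly with hA | hB
  · exact hT.deleteEdges_pair_of_connectedComponentMk_eq h₁ ha₁ hb₁ h₂ ha₂ hb₂ hne honly hA
  have hswap : ({s(b₁, a₁), s(b₂, a₂)} : Set (Sym2 V)) = {s(a₁, b₁), s(a₂, b₂)} := by
    rw [Sym2.eq_swap, Sym2.eq_swap (a := b₂)]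
  have honly_compl : ∀ x y : V, T.Adj x y → x ∈ Sᶜ → y ∉ Sᶜ →
      s(x, y) = s(b₁, a₁) ∨ s(x, y) = s(b₂, a₂) := fun x y hxy hx hy ↦ by
    rw [Sym2.eq_swap (a := x), Sym2.eq_swap (a := b₁), Sym2.eq_swap (a := b₂)]
    exact honly y x hxy.symm (not_not.1 hy) hx
  have := hT.deleteEdges_pair_of_connectedComponentMk_eq h₁.symm hb₁ (not_not.2 ha₁) h₂.symm hb₂
    (not_not.2 ha₂) (by rwa [Sym2.eq_swap, Sym2.eq_swap (a := b₂)]) honly_compl (hswap ▸ hB)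
  rw [hswap] at this
  simpa only [or_comm, compl_compl] using this

theorem stmt6 {V : Type*} [Fintype V] (G T : SimpleGraph V)
    (hTG : T ≤ G) (hT : T.IsTree)
    (S : Set V) (hS : S.Nonempty) (hSc : Sᶜ.Nonempty)
    (a₁ b₁ a₂ b₂ : V)
    (h₁ : T.Adj a₁ b₁) (ha₁ : a₁ ∈ S) (hb₁ : b₁ ∉ S)
    (h₂ : T.Adj a₂ b₂) (ha₂ : a₂ ∈ S) (hb₂ : b₂ ∉ S)
    (hne : s(a₁, b₁) ≠ s(a₂, b₂))
    (honly : ∀ x y : V, T.Adj x y → x ∈ S → y ∉ S →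
      s(x, y) = s(a₁, b₁) ∨ s(x, y) = s(a₂, b₂)) :
    Nat.card (T.deleteEdges {s(a₁, b₁), s(a₂, b₂)}).ConnectedComponent = 3 ∧
    (∃! c : (T.deleteEdges {s(a₁, b₁), s(a₂, b₂)}).ConnectedComponent,
      ((T.deleteEdges {s(a₁, b₁), s(a₂, b₂)}).connectedComponentMk a₁ = c ∨
        (T.deleteEdges {s(a₁, b₁), s(a₂, b₂)}).connectedComponentMk b₁ = c) ∧
      ((T.deleteEdges {s(a₁, b₁), s(a₂, b₂)}).connectedComponentMk a₂ = c ∨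
        (T.deleteEdges {s(a₁, b₁), s(a₂, b₂)}).connectedComponentMk b₂ = c)) ∧
    (∀ c : (T.deleteEdges {s(a₁, b₁), s(a₂, b₂)}).ConnectedComponent,
      (((T.deleteEdges {s(a₁, b₁), s(a₂, b₂)}).connectedComponentMk a₁ = c ∨
          (T.deleteEdges {s(a₁, b₁), s(a₂, b₂)}).connectedComponentMk b₁ = c) ∧
        ((T.deleteEdges {s(a₁, b₁), s(a₂, b₂)}).connectedComponentMk a₂ = c ∨
          (T.deleteEdges {s(a₁, b₁), s(a₂, b₂)}).connectedComponentMk b₂ = c)) →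
      c.supp = S ∨ c.supp = Sᶜ) :=
  stmt6_general T hT S a₁ b₁ a₂ b₂ h₁ ha₁ hb₁ h₂ ha₂ hb₂ hne honly
end

section
/- Let α ≥ 1 and let G be a finite simple graph on n vertices such that every subgraph of G on k vertices has at most α·k edges. Define a peeling process: in each round, delete simultaneously all vertices whose current degree is at most 3α. Then the process deletes at least one third of the remaining vertices in every round, and hence the graph is empty after at most ⌈log_{3/2} n⌉ + 1 rounds. -/
open SimpleGraph
open scoped Classical

/-- One round of peeling: keep exactly the vertices whose degree in the surviving
induced subgraph is strictly larger than `3 * α`. -/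
noncomputable def peelStep {V : Type*} [DecidableEq V] (G : SimpleGraph V) [DecidableRel G.Adj]
    (α : ℕ) (s : Finset V) : Finset V :=
  s.filter fun v => 3 * α < (s.filter fun u => G.Adj v u).card

/-- The set of surviving vertices after `k` rounds of peeling. -/
noncomputable def peel {V : Type*} [Fintype V] [DecidableEq V] (G : SimpleGraph V)
    [DecidableRel G.Adj] (α : ℕ) : ℕ → Finset V
  | 0 => Finset.univ
  | k + 1 => peelStep G α (peel G α k)

/-! Within a vertex set `s`, the degrees into `s` sum to twice the number of edges inside `s`,
hence to at most `2α|s|`. Every vertex surviving a round contributes more than `3α` to that sum,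
so fewer than `2|s|/3` vertices survive. After `k` rounds at most `(2/3)^k n` vertices remain,
and this drops below one once `k > log_{3/2} n`. -/

theorem SimpleGraph.sum_card_filter_adj_eq_two_mul_card_edges {V : Type*} [Fintype V]
    [DecidableEq V] (G : SimpleGraph V) [DecidableRel G.Adj] (s : Finset V) :
    ∑ v ∈ s, (s.filter fun u => G.Adj v u).card
      = 2 * (G.edgeFinset.filter fun e => ∀ x ∈ e, x ∈ s).card := by
  have hdeg (v : (s : Set V)) :
      (G.induce s).degree v = (s.filter fun u => G.Adj v u).card := by
    have := congrArg Finset.card (map_neighborFinset_induce (G := G) v)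
    rw [Finset.card_map, card_neighborFinset_eq_degree] at this
    convert this using 2
    ext; simp [and_comm]
  have hedges : (G.induce s).edgeFinset.card
      = (G.edgeFinset.filter fun e => ∀ x ∈ e, x ∈ s).card := by
    have := congrArg Finset.card (map_edgeFinset_induce (G := G) (s := (s : Set V)))
    rw [Finset.card_map] at this
    convert this using 3
    ext e; simp [Finset.mem_sym2_iff]
  rw [← hedges, ← sum_degrees_eq_twice_card_edges, ← Finset.sum_coe_sort s]
  exact Finset.sum_congr rfl fun v _ => (hdeg v).symm

theorem three_mul_card_peelStep_le {V : Type*} [Fintype V] [DecidableEq V] (G : SimpleGraph V)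
    [DecidableRel G.Adj] (α : ℕ) {s : Finset V}
    (hs : (G.edgeFinset.filter fun e => ∀ x ∈ e, x ∈ s).card ≤ α * s.card) :
    3 * (peelStep G α s).card ≤ 2 * s.card := by
  have hsum : (3 * α + 1) * (peelStep G α s).card ≤ 2 * (α * s.card) :=
    calc (3 * α + 1) * (peelStep G α s).card
        ≤ ∑ v ∈ peelStep G α s, (s.filter fun u => G.Adj v u).card := by
          rw [mul_comm, ← smul_eq_mul]
          exact Finset.card_nsmul_le_sum _ _ _ fun v hv => (Finset.mem_filter.mp hv).2
      _ ≤ ∑ v ∈ s, (s.filter fun u => G.Adj v u).card :=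
          Finset.sum_le_sum_of_subset (Finset.filter_subset _ _)
      _ = 2 * (G.edgeFinset.filter fun e => ∀ x ∈ e, x ∈ s).card :=
          G.sum_card_filter_adj_eq_two_mul_card_edges s
      _ ≤ 2 * (α * s.card) := Nat.mul_le_mul_left 2 hs
  -- `(3α + 1) t ≤ 2α s` gives `3t ≤ 2s`; when `α = 0` it gives `t = 0`.
  nlinarith

theorem pow_mul_le_pow_mul_of_forall_mul_succ_le {a : ℕ → ℕ} {p q : ℕ}
    (h : ∀ k, p * a (k + 1) ≤ q * a k) (k : ℕ) : p ^ k * a k ≤ q ^ k * a 0 := by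
  induction k with
  | zero => simp
  | succ k ih =>
    calc p ^ (k + 1) * a (k + 1) = p ^ k * (p * a (k + 1)) := by ring
      _ ≤ p ^ k * (q * a k) := Nat.mul_le_mul_left _ (h k)
      _ = q * (p ^ k * a k) := by ring
      _ ≤ q * (q ^ k * a 0) := Nat.mul_le_mul_left _ ih
      _ = q ^ (k + 1) * a 0 := by ring

theorem eq_zero_of_forall_mul_succ_le {a : ℕ → ℕ} {p q : ℕ}
    (h : ∀ k, p * a (k + 1) ≤ q * a k) {k : ℕ} (hk : q ^ k * a 0 < p ^ k) : a k = 0 := by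
  by_contra hak
  have hgeom := pow_mul_le_pow_mul_of_forall_mul_succ_le h k
  have hle : p ^ k ≤ p ^ k * a k := Nat.le_mul_of_pos_right _ (Nat.pos_of_ne_zero hak)
  omega

theorem Real.lt_pow_natCeil_logb_add_one {b : ℝ} (hb : 1 < b) (x : ℝ) :
    x < b ^ (⌈Real.logb b x⌉₊ + 1) := by
  rcases le_or_gt x 0 with hx | hx
  · exact hx.trans_lt (by positivity)
  · rw [← Real.rpow_natCast, ← Real.logb_lt_iff_lt_rpow hb hx]
    push_cast
    linarith [Nat.le_ceil (Real.logb b x)]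

theorem stmt11_general {V : Type*} [Fintype V] [DecidableEq V] (G : SimpleGraph V)
    [DecidableRel G.Adj] (α : ℕ)
    (harb : ∀ s : Finset V,
      (G.edgeFinset.filter fun e => ∀ x ∈ e, x ∈ s).card ≤ α * s.card) :
    (∀ k : ℕ, 3 * (peel G α (k + 1)).card ≤ 2 * (peel G α k).card) ∧
      peel G α (⌈Real.logb (3 / 2) (Fintype.card V)⌉₊ + 1) = ∅ := by
  have hstep (k : ℕ) : 3 * (peel G α (k + 1)).card ≤ 2 * (peel G α k).card :=
    three_mul_card_peelStep_le G α (harb _)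
  refine ⟨hstep, Finset.card_eq_zero.mp
    (eq_zero_of_forall_mul_succ_le (a := fun k => (peel G α k).card) hstep ?_)⟩
  have hn := Real.lt_pow_natCeil_logb_add_one (b := 3 / 2) (by norm_num) (Fintype.card V)
  rw [div_pow, lt_div_iff₀ (by positivity)] at hn
  rw [peel, Finset.card_univ, mul_comm]
  exact_mod_cast hn

theorem stmt11 {V : Type*} [Fintype V] [DecidableEq V] (G : SimpleGraph V)
    [DecidableRel G.Adj] (α : ℕ) (hα : 1 ≤ α)
    (harb : ∀ s : Finset V,
      (G.edgeFinset.filter fun e => ∀ x ∈ e, x ∈ s).card ≤ α * s.card) :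
    (∀ k : ℕ, 3 * (peel G α (k + 1)).card ≤ 2 * (peel G α k).card) ∧
      peel G α (⌈Real.logb (3 / 2) (Fintype.card V)⌉₊ + 1) = ∅ :=
  stmt11_general G α harb
end
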